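/- Let n ≥ 2 and let D ⊊ ℝⁿ be an Apollonian domain satisfying α̃_D(x,y) ≤ c₂ j'_D(x,y) for all x, y ∈ D, for some constant c₂ > 1. Let γ ⊂ D be a path joining two points with α_D(γ) = α̃_D of its endpoints, and let u, v be points of γ (in this order along γ) such that d_D(u) ≤ d_D(v), d_D(v) = 2 d_D(u), and d_D(w) ≤ 2 d_D(u) for all w ∈ γ[u,v]. Then ρ_D(u,v) ≤ (1+b₁)² d_D(u), where b₁ = 24([c₂]+1) and [·] denotes the greatest integer part. -/

import Mathlib

open Set Metric Real

noncomputable section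

/-- Euclidean `n`-space. -/
abbrev Eucl (n : ℕ) : Type := EuclideanSpace ℝ (Fin n)

/-- A domain: a nonempty, open, connected, proper subset of `ℝⁿ`. -/
def IsDomainIn {n : ℕ} (D : Set (Eucl n)) : Prop :=
  IsOpen D ∧ IsConnected D ∧ D ≠ Set.univ

/-- `D` is Apollonian: its complement is not contained in any hyperplane. -/
def IsApollonian {n : ℕ} (D : Set (Eucl n)) : Prop :=
  ¬ ∃ (x₀ v : Eucl n), v ≠ 0 ∧ ∀ y ∈ Dᶜ, (inner ℝ v (y - x₀) : ℝ) = 0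

/-- Distance from `x` to the boundary `∂D`. -/
def bdist {n : ℕ} (D : Set (Eucl n)) (x : Eucl n) : ℝ :=
  Metric.infDist x (frontier D)

/-- The Apollonian metric `α_D(x,y) = sup_{a,b ∈ ∂D} log (|a-x||b-y| / (|a-y||b-x|))`,
with the convention about `∞` as a boundary point (which occurs exactly when both `D`
and its complement are unbounded): if `a = ∞` the term is `log(|b-y|/|b-x|)`, if `b = ∞`
the term is `log(|a-x|/|a-y|)`, and if both are `∞` the term is `0`. -/
def apol {n : ℕ} (D : Set (Eucl n)) (x y : Eucl n) : ℝ :=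
  sSup ({r | ∃ a ∈ frontier D, ∃ b ∈ frontier D,
          r = Real.log ((dist a x * dist b y) / (dist a y * dist b x))} ∪
        {r | (¬ Bornology.IsBounded D ∧ ¬ Bornology.IsBounded Dᶜ) ∧
          ((∃ b ∈ frontier D, r = Real.log (dist b y / dist b x)) ∨
           (∃ a ∈ frontier D, r = Real.log (dist a x / dist a y)) ∨ r = 0)})

/-- `γ`, restricted to `[0,1]`, is a path in `D` from `x` to `y`. -/
def IsPathIn {n : ℕ} (D : Set (Eucl n)) (x y : Eucl n) (γ : ℝ → Eucl n) : Prop :=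
  ContinuousOn γ (Set.Icc 0 1) ∧ Set.MapsTo γ (Set.Icc 0 1) D ∧ γ 0 = x ∧ γ 1 = y

/-- A path is rectifiable when it has finite Euclidean length. -/
def Rectifiable {n : ℕ} (γ : ℝ → Eucl n) : Prop :=
  eVariationOn γ (Set.Icc 0 1) ≠ ⊤

/-- Euclidean arc length of `γ` over `[a,b]`. -/
def elen {n : ℕ} (γ : ℝ → Eucl n) (a b : ℝ) : ℝ :=
  (eVariationOn γ (Set.Icc a b)).toReal

/-- The `d`-length of the path `γ` over `[a,b]`: the supremum of
`Σ d(γ(t_i), γ(t_{i+1}))` over all partitions `a = t₀ ≤ t₁ ≤ ⋯ ≤ t_k = b`. -/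
def dLength {n : ℕ} (d : Eucl n → Eucl n → ℝ) (γ : ℝ → Eucl n) (a b : ℝ) : ℝ :=
  sSup {s | ∃ (k : ℕ) (t : ℕ → ℝ), Monotone t ∧ t 0 = a ∧ t k = b ∧
        s = ∑ i ∈ Finset.range k, d (γ (t i)) (γ (t (i + 1)))}

/-- The inner metric of `d`: infimum of `d`-lengths of rectifiable paths in `D`
joining `x` and `y`. -/
def innerMetric {n : ℕ} (D : Set (Eucl n)) (d : Eucl n → Eucl n → ℝ) (x y : Eucl n) : ℝ :=
  sInf {L | ∃ γ : ℝ → Eucl n, IsPathIn D x y γ ∧ Rectifiable γ ∧ L = dLength d γ 0 1}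

/-- The Apollonian inner metric `α̃_D`. -/
def innerApol {n : ℕ} (D : Set (Eucl n)) (x y : Eucl n) : ℝ :=
  innerMetric D (apol D) x y

/-- The inner diameter metric `ρ_D(x,y) = inf_γ diam γ`. -/
def rhoD {n : ℕ} (D : Set (Eucl n)) (x y : Eucl n) : ℝ :=
  sInf {L | ∃ γ : ℝ → Eucl n, IsPathIn D x y γ ∧ L = Metric.diam (γ '' Set.Icc 0 1)}

/-- `j'_D(x,y) = log (1 + ρ_D(x,y) / min (d_D(x), d_D(y)))`. -/
def jP {n : ℕ} (D : Set (Eucl n)) (x y : Eucl n) : ℝ :=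
  Real.log (1 + rhoD D x y / min (bdist D x) (bdist D y))

/-- The quasihyperbolic metric `k_D(x,y) = inf_γ ∫_γ |dz|/d_D(z)`. -/
def quasiHyp {n : ℕ} (D : Set (Eucl n)) (x y : Eucl n) : ℝ :=
  sInf {L | ∃ γ : ℝ → Eucl n, IsPathIn D x y γ ∧ DifferentiableOn ℝ γ (Set.Icc 0 1) ∧
        L = ∫ t in (0:ℝ)..1, ‖derivWithin γ (Set.Icc 0 1) t‖ / bdist D (γ t)}

/-- `λ_D(x,y)`: infimum of Euclidean arc lengths of paths in `D` joining `x` and `y`. -/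
def lambdaD {n : ℕ} (D : Set (Eucl n)) (x y : Eucl n) : ℝ :=
  sInf {L | ∃ γ : ℝ → Eucl n, IsPathIn D x y γ ∧ Rectifiable γ ∧ L = elen γ 0 1}

/-- `D` is inner `c`-uniform. -/
def IsInnerUniform {n : ℕ} (D : Set (Eucl n)) (c : ℝ) : Prop :=
  ∀ x ∈ D, ∀ y ∈ D, ∃ γ : ℝ → Eucl n, IsPathIn D x y γ ∧ Rectifiable γ ∧
    (∀ t ∈ Set.Icc (0:ℝ) 1, min (elen γ 0 t) (elen γ t 1) ≤ c * bdist D (γ t)) ∧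
    elen γ 0 1 ≤ c * lambdaD D x y

/-- Condition (4): every pair of points of `D` can be joined by an arc `γ` with
`min(diam γ[x,w], diam γ[y,w]) ≤ c d_D(w)` for all `w ∈ γ` and `diam γ ≤ c ρ_D(x,y)`. -/
def DiamCond {n : ℕ} (D : Set (Eucl n)) (c : ℝ) : Prop :=
  ∀ x ∈ D, ∀ y ∈ D, ∃ γ : ℝ → Eucl n, IsPathIn D x y γ ∧
    (∀ t ∈ Set.Icc (0:ℝ) 1,
      min (Metric.diam (γ '' Set.Icc 0 t)) (Metric.diam (γ '' Set.Icc t 1))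
        ≤ c * bdist D (γ t)) ∧
    Metric.diam (γ '' Set.Icc 0 1) ≤ c * rhoD D x y


/-!
Write `u = γ s`, `v = γ t` and `δ = d_D(u)`. Replacing a subarc of a path of minimal
Apollonian length by a competitor and using additivity of the `α_D`-length shows that
`γ[u,v]` is again minimal, so `α_D(γ[u,v]) ≤ α̃_D(u,v) ≤ c₂ log (1 + ρ_D(u,v)/δ)`.
On the other hand every point of `γ[u,v]` is within `2δ` of `∂D`, and two such points at
distance at least `6δ` are at Apollonian distance at least `log 4` (test `α_D` with the
boundary points nearest to each of them). If `R` is the largest distance from `u` to a point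
of `γ[u,v]`, the first times at which `γ` reaches distance `6δj` from `u` give
`⌊R/6δ⌋` consecutive such pairs, so `α_D(γ[u,v]) ≥ ⌊R/6δ⌋ log 4`. As
`ρ_D(u,v) ≤ diam γ[u,v] ≤ 2R`, linear growth against logarithmic growth bounds `R/δ`.
-/

namespace IsDomainIn

variable {n : ℕ} {D : Set (Eucl n)}

theorem frontier_nonempty (hD : IsDomainIn D) : (frontier D).Nonempty :=
  nonempty_frontier_iff.2 ⟨hD.2.1.nonempty, hD.2.2⟩

theorem dist_pos_of_mem_frontier (hD : IsDomainIn D) {a x : Eucl n} (ha : a ∈ frontier D)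
    (hx : x ∈ D) : 0 < dist a x :=
  dist_pos.2 fun hax => (hD.1.inter_frontier_eq.subset ⟨hax ▸ hx, ha⟩ :)

theorem bdist_pos (hD : IsDomainIn D) {x : Eucl n} (hx : x ∈ D) : 0 < bdist D x :=
  (isClosed_frontier.notMem_iff_infDist_pos hD.frontier_nonempty).1 fun h =>
    (hD.1.inter_frontier_eq.subset ⟨hx, h⟩ :)

end IsDomainIn

section Apollonian

open scoped Pointwise

variable {n : ℕ} {D : Set (Eucl n)} {x y z : Eucl n}

theorem bdist_le_dist {a : Eucl n} (ha : a ∈ frontier D) (x : Eucl n) :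
    bdist D x ≤ dist a x := by
  rw [dist_comm]
  exact infDist_le_dist_of_mem ha

def apolSet (D : Set (Eucl n)) (x y : Eucl n) : Set ℝ :=
  {r | ∃ a ∈ frontier D, ∃ b ∈ frontier D,
          r = Real.log ((dist a x * dist b y) / (dist a y * dist b x))} ∪
        {r | (¬ Bornology.IsBounded D ∧ ¬ Bornology.IsBounded Dᶜ) ∧
          ((∃ b ∈ frontier D, r = Real.log (dist b y / dist b x)) ∨
           (∃ a ∈ frontier D, r = Real.log (dist a x / dist a y)) ∨ r = 0)}

theorem apol_eq_sSup_apolSet : apol D x y = sSup (apolSet D x y) := rfl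

theorem log_dist_div_le (hD : IsDomainIn D) {a : Eucl n} (ha : a ∈ frontier D) (hx : x ∈ D)
    (hy : y ∈ D) : log (dist a x / dist a y) ≤ dist x y / bdist D y := by
  have hax := hD.dist_pos_of_mem_frontier ha hx
  have hay := hD.dist_pos_of_mem_frontier ha hy
  calc log (dist a x / dist a y) ≤ dist a x / dist a y - 1 :=
        log_le_sub_one_of_pos (by positivity)
    _ = (dist a x - dist a y) / dist a y := by field_simp
    _ ≤ dist x y / dist a y := by
        gcongr
        linarith [dist_triangle a y x, dist_comm x y]
    _ ≤ dist x y / bdist D y := by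
        gcongr
        exacts [hD.bdist_pos hy, bdist_le_dist ha y]

theorem le_of_mem_apolSet (hD : IsDomainIn D) (hx : x ∈ D) (hy : y ∈ D) {r : ℝ}
    (hr : r ∈ apolSet D x y) : r ≤ dist x y / bdist D x + dist x y / bdist D y := by
  have hxy : 0 ≤ dist x y / bdist D x := div_nonneg dist_nonneg infDist_nonneg
  have hyx : 0 ≤ dist x y / bdist D y := div_nonneg dist_nonneg infDist_nonneg
  have hlog {a : Eucl n} (ha : a ∈ frontier D) :
      log (dist a y / dist a x) ≤ dist x y / bdist D x :=
    dist_comm x y ▸ log_dist_div_le hD ha hy hx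
  rcases hr with ⟨a, ha, b, hb, rfl⟩ | ⟨-, ⟨b, hb, rfl⟩ | ⟨a, ha, rfl⟩ | rfl⟩
  · have := hD.dist_pos_of_mem_frontier ha hy
    have := hD.dist_pos_of_mem_frontier hb hx
    have := hD.dist_pos_of_mem_frontier ha hx
    have := hD.dist_pos_of_mem_frontier hb hy
    rw [mul_div_mul_comm, log_mul (by positivity) (by positivity)]
    linarith [log_dist_div_le hD ha hx hy, hlog hb]
  · linarith [hlog hb]
  · linarith [log_dist_div_le hD ha hx hy]
  · positivity

theorem zero_mem_apolSet (hD : IsDomainIn D) (hx : x ∈ D) (hy : y ∈ D) :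
    0 ∈ apolSet D x y := by
  obtain ⟨a, ha⟩ := hD.frontier_nonempty
  have := hD.dist_pos_of_mem_frontier ha hx
  have := hD.dist_pos_of_mem_frontier ha hy
  refine Or.inl ⟨a, ha, a, ha, ?_⟩
  rw [mul_comm (dist a y), div_self (by positivity), log_one]

theorem bddAbove_apolSet (hD : IsDomainIn D) (hx : x ∈ D) (hy : y ∈ D) :
    BddAbove (apolSet D x y) :=
  ⟨_, fun _ => le_of_mem_apolSet hD hx hy⟩

theorem le_apol (hD : IsDomainIn D) (hx : x ∈ D) (hy : y ∈ D) {r : ℝ}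
    (hr : r ∈ apolSet D x y) : r ≤ apol D x y :=
  le_csSup (bddAbove_apolSet hD hx hy) hr

theorem apol_nonneg (hD : IsDomainIn D) (hx : x ∈ D) (hy : y ∈ D) : 0 ≤ apol D x y :=
  le_apol hD hx hy (zero_mem_apolSet hD hx hy)

theorem apol_le (hD : IsDomainIn D) (hx : x ∈ D) (hy : y ∈ D) :
    apol D x y ≤ dist x y / bdist D x + dist x y / bdist D y :=
  csSup_le ⟨0, zero_mem_apolSet hD hx hy⟩ fun _ => le_of_mem_apolSet hD hx hy

theorem apol_le_two_div_mul_dist (hD : IsDomainIn D) (hx : x ∈ D) (hy : y ∈ D) {δ₀ : ℝ}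
    (hδ₀ : 0 < δ₀) (hxδ₀ : δ₀ ≤ bdist D x) (hyδ₀ : δ₀ ≤ bdist D y) :
    apol D x y ≤ 2 / δ₀ * dist x y :=
  calc apol D x y ≤ dist x y / bdist D x + dist x y / bdist D y := apol_le hD hx hy
    _ ≤ dist x y / δ₀ + dist x y / δ₀ := by gcongr
    _ = 2 / δ₀ * dist x y := by ring

theorem apolSet_subset_add (hD : IsDomainIn D) (hx : x ∈ D) (hy : y ∈ D) (hz : z ∈ D) :
    apolSet D x z ⊆ apolSet D x y + apolSet D y z := by
  have h {a : Eucl n} (ha : a ∈ frontier D) : 0 < dist a x ∧ 0 < dist a y ∧ 0 < dist a z :=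
    ⟨hD.dist_pos_of_mem_frontier ha hx, hD.dist_pos_of_mem_frontier ha hy,
      hD.dist_pos_of_mem_frontier ha hz⟩
  rintro r (⟨a, ha, b, hb, rfl⟩ | ⟨hu, ⟨b, hb, rfl⟩ | ⟨a, ha, rfl⟩ | rfl⟩)
  · obtain ⟨_, _, _⟩ := h ha
    obtain ⟨_, _, _⟩ := h hb
    refine mem_add.2 ⟨_, Or.inl ⟨a, ha, b, hb, rfl⟩, _, Or.inl ⟨a, ha, b, hb, rfl⟩, ?_⟩
    rw [← log_mul (by positivity) (by positivity)]
    field_simp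
  · obtain ⟨_, _, _⟩ := h hb
    refine mem_add.2 ⟨_, Or.inr ⟨hu, Or.inl ⟨b, hb, rfl⟩⟩, _,
      Or.inr ⟨hu, Or.inl ⟨b, hb, rfl⟩⟩, ?_⟩
    rw [← log_mul (by positivity) (by positivity)]
    field_simp
  · obtain ⟨_, _, _⟩ := h ha
    refine mem_add.2 ⟨_, Or.inr ⟨hu, Or.inr (Or.inl ⟨a, ha, rfl⟩)⟩, _,
      Or.inr ⟨hu, Or.inr (Or.inl ⟨a, ha, rfl⟩)⟩, ?_⟩
    rw [← log_mul (by positivity) (by positivity)]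
    field_simp
  · exact ⟨0, zero_mem_apolSet hD hx hy, 0, zero_mem_apolSet hD hy hz, zero_add 0⟩

theorem apol_triangle (hD : IsDomainIn D) (hx : x ∈ D) (hy : y ∈ D) (hz : z ∈ D) :
    apol D x z ≤ apol D x y + apol D y z := by
  simp only [apol_eq_sSup_apolSet]
  rw [← csSup_add ⟨0, zero_mem_apolSet hD hx hy⟩ (bddAbove_apolSet hD hx hy)
    ⟨0, zero_mem_apolSet hD hy hz⟩ (bddAbove_apolSet hD hy hz)]
  exact csSup_le_csSup ((bddAbove_apolSet hD hx hy).add (bddAbove_apolSet hD hy hz))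
    ⟨0, zero_mem_apolSet hD hx hz⟩ (apolSet_subset_add hD hx hy hz)

theorem log_four_le_apol (hD : IsDomainIn D) (hx : x ∈ D) (hy : y ∈ D) {m : ℝ}
    (hxm : bdist D x ≤ m) (hym : bdist D y ≤ m) (hxy : 3 * m ≤ dist x y) :
    log 4 ≤ apol D x y := by
  obtain ⟨a, ha, hay⟩ := isClosed_frontier.exists_infDist_eq_dist hD.frontier_nonempty y
  obtain ⟨b, hb, hbx⟩ := isClosed_frontier.exists_infDist_eq_dist hD.frontier_nonempty x
  have hay' : dist a y ≤ m := by rw [dist_comm, ← hay]; exact hym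
  have hbx' : dist b x ≤ m := by rw [dist_comm, ← hbx]; exact hxm
  have := hD.dist_pos_of_mem_frontier ha hy
  have := hD.dist_pos_of_mem_frontier hb hx
  have hax : 2 * m ≤ dist a x := by linarith [dist_triangle x a y, dist_comm x a]
  have hby : 2 * m ≤ dist b y := by linarith [dist_triangle y b x, dist_comm y b, dist_comm x y]
  refine (log_le_log (by norm_num) ?_).trans (le_apol hD hx hy (Or.inl ⟨a, ha, b, hb, rfl⟩))
  rw [le_div_iff₀ (by positivity)]
  calc 4 * (dist a y * dist b x) ≤ 2 * m * (2 * m) := by nlinarith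
    _ ≤ dist a x * dist b y := mul_le_mul hax hby (by linarith) (by linarith)

end Apollonian

theorem monotone_ite_le_sub {α : Type*} [Preorder α] {f g : ℕ → α} {k : ℕ}
    (hf : MonotoneOn f (Iic k)) (hg : Monotone g) (hfg : f k ≤ g 0) :
    Monotone fun j => if j ≤ k then f j else g (j - k) := by
  intro i j hij
  dsimp only
  split_ifs with hi hj hj
  · exact hf hi hj hij
  · exact (hf hi (mem_Iic.2 le_rfl) hi).trans (hfg.trans (hg (Nat.zero_le _)))
  · omega
  · exact hg (Nat.sub_le_sub_right hij k)

section PartitionSums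

open scoped Pointwise

variable {n : ℕ} {d : Eucl n → Eucl n → ℝ} {γ γ' : ℝ → Eucl n} {a b c : ℝ}

def partitionSums (d : Eucl n → Eucl n → ℝ) (γ : ℝ → Eucl n) (a b : ℝ) : Set ℝ :=
  {s | ∃ (k : ℕ) (t : ℕ → ℝ), Monotone t ∧ t 0 = a ∧ t k = b ∧
        s = ∑ i ∈ Finset.range k, d (γ (t i)) (γ (t (i + 1)))}

theorem dLength_eq_sSup_partitionSums : dLength d γ a b = sSup (partitionSums d γ a b) := rfl

theorem mem_Icc_of_monotone {t : ℕ → ℝ} {k : ℕ} (ht : Monotone t) (ht0 : t 0 = a)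
    (htk : t k = b) {j : ℕ} (hj : j ≤ k) : t j ∈ Icc a b :=
  ⟨ht0 ▸ ht (Nat.zero_le j), htk ▸ ht hj⟩

theorem partitionSums_nonempty (hab : a ≤ b) : (partitionSums d γ a b).Nonempty :=
  ⟨_, 1, fun j => if j ≤ 0 then a else b,
    monotone_ite_le_sub (g := fun _ => b) monotoneOn_const monotone_const hab, rfl, rfl, rfl⟩

theorem add_mem_partitionSums {P Q : ℝ} (hP : P ∈ partitionSums d γ a b)
    (hQ : Q ∈ partitionSums d γ b c) : P + Q ∈ partitionSums d γ a c := by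
  obtain ⟨k, t, ht, ht0, htk, rfl⟩ := hP
  obtain ⟨l, u, hu, hu0, hul, rfl⟩ := hQ
  have hglue : t k = u 0 := htk.trans hu0.symm
  set T : ℕ → ℝ := fun j => if j ≤ k then t j else u (j - k)
  have hT_left {j : ℕ} (hj : j ≤ k) : T j = t j := if_pos hj
  have hT_right (i : ℕ) : T (k + i) = u i := by
    rcases i with _ | i
    · exact (if_pos le_rfl).trans hglue
    · exact (if_neg (by omega)).trans (by simp)
  refine ⟨k + l, T, monotone_ite_le_sub (ht.monotoneOn _) hu hglue.le,
    (hT_left (Nat.zero_le k)).trans ht0, (hT_right l).trans hul, ?_⟩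
  rw [Finset.sum_range_add]
  congr 1
  · refine Finset.sum_congr rfl fun i hi => ?_
    have hi := Finset.mem_range.1 hi
    rw [hT_left hi.le, hT_left hi]
  · refine Finset.sum_congr rfl fun i _ => ?_
    rw [add_assoc, hT_right, hT_right]

theorem add_le_dLength (hab : a ≤ b) (hbc : b ≤ c) (hab' : BddAbove (partitionSums d γ a b))
    (hbc' : BddAbove (partitionSums d γ b c)) (hac : BddAbove (partitionSums d γ a c)) :
    dLength d γ a b + dLength d γ b c ≤ dLength d γ a c := by
  simp only [dLength_eq_sSup_partitionSums]
  rw [← csSup_add (partitionSums_nonempty hab) hab' (partitionSums_nonempty hbc) hbc']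
  exact csSup_le_csSup hac ((partitionSums_nonempty hab).add (partitionSums_nonempty hbc))
    (Set.add_subset_iff.2 fun _ hP _ hQ => add_mem_partitionSums hP hQ)

theorem le_apply_min_add_apply_max {S : Set (Eucl n)}
    (htri : ∀ p ∈ S, ∀ q ∈ S, ∀ r ∈ S, d p r ≤ d p q + d q r) {x y : ℝ}
    (hxy : x ≤ y) (hx : γ x ∈ S) (hy : γ y ∈ S) (hb : γ b ∈ S) :
    d (γ x) (γ y) ≤ d (γ (min x b)) (γ (min y b)) + d (γ (max x b)) (γ (max y b)) := by
  have hbb := htri _ hb _ hb _ hb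
  rcases le_total y b with hyb | hby
  · rw [min_eq_left hyb, min_eq_left (hxy.trans hyb), max_eq_right hyb,
      max_eq_right (hxy.trans hyb)]
    linarith
  rcases le_total x b with hxb | hbx
  · rw [min_eq_left hxb, min_eq_right hby, max_eq_right hxb, max_eq_left hby]
    exact htri _ hx _ hb _ hy
  · rw [min_eq_right hbx, min_eq_right (hbx.trans hxy), max_eq_left hbx,
      max_eq_left (hbx.trans hxy)]
    linarith

theorem dLength_le_add {S : Set (Eucl n)} (hγS : MapsTo γ (Icc a c) S)
    (htri : ∀ p ∈ S, ∀ q ∈ S, ∀ r ∈ S, d p r ≤ d p q + d q r) (hab : a ≤ b)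
    (hbc : b ≤ c) (hab' : BddAbove (partitionSums d γ a b))
    (hbc' : BddAbove (partitionSums d γ b c)) :
    dLength d γ a c ≤ dLength d γ a b + dLength d γ b c := by
  simp only [dLength_eq_sSup_partitionSums]
  rw [← csSup_add (partitionSums_nonempty hab) hab' (partitionSums_nonempty hbc) hbc']
  refine csSup_le (partitionSums_nonempty (hab.trans hbc)) ?_
  rintro _ ⟨k, t, ht, ht0, htk, rfl⟩
  have hmem {j : ℕ} (hj : j ≤ k) : γ (t j) ∈ S := hγS (mem_Icc_of_monotone ht ht0 htk hj)
  have hleft : (∑ i ∈ Finset.range k, d (γ (min (t i) b)) (γ (min (t (i + 1)) b))) ∈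
      partitionSums d γ a b :=
    ⟨k, fun j => min (t j) b, fun i j hij => min_le_min_right b (ht hij),
      by simp [ht0, hab], by simp [htk, hbc], rfl⟩
  have hright : (∑ i ∈ Finset.range k, d (γ (max (t i) b)) (γ (max (t (i + 1)) b))) ∈
      partitionSums d γ b c :=
    ⟨k, fun j => max (t j) b, fun i j hij => max_le_max_right b (ht hij),
      by simp [ht0, hab], by simp [htk, hbc], rfl⟩
  refine le_trans ?_ (le_csSup (hab'.add hbc') (add_mem_add hleft hright))
  rw [← Finset.sum_add_distrib]
  refine Finset.sum_le_sum fun i hi => ?_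
  have hi := Finset.mem_range.1 hi
  exact le_apply_min_add_apply_max htri (ht (Nat.le_succ i)) (hmem hi.le) (hmem hi)
    (hγS ⟨hab, hbc⟩)

theorem partitionSums_congr (h : EqOn γ γ' (Icc a b)) :
    partitionSums d γ a b = partitionSums d γ' a b := by
  ext P
  refine exists_congr fun k => exists_congr fun t => and_congr_right fun ht =>
    and_congr_right fun ht0 => and_congr_right fun htk => ?_
  have hmem {j : ℕ} (hj : j ≤ k) : t j ∈ Icc a b := mem_Icc_of_monotone ht ht0 htk hj
  rw [Finset.sum_congr rfl fun i hi => by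
    rw [h (hmem (Finset.mem_range.1 hi).le), h (hmem (Finset.mem_range.1 hi))]]

theorem dLength_congr (h : EqOn γ γ' (Icc a b)) : dLength d γ a b = dLength d γ' a b := by
  simp only [dLength_eq_sSup_partitionSums, partitionSums_congr h]

theorem dLength_comp_orderIso (e : ℝ ≃o ℝ) :
    dLength d (γ ∘ e) a b = dLength d γ (e a) (e b) := by
  simp only [dLength_eq_sSup_partitionSums]
  congr 1
  ext P
  constructor
  · rintro ⟨k, t, ht, ht0, htk, rfl⟩
    exact ⟨k, e ∘ t, e.monotone.comp ht, by simp [ht0], by simp [htk], rfl⟩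
  · rintro ⟨k, u, hu, hu0, huk, rfl⟩
    exact ⟨k, e.symm ∘ u, e.symm.monotone.comp hu, by simp [hu0], by simp [huk], by simp⟩

end PartitionSums

section RectifiablePaths

variable {n : ℕ} {D : Set (Eucl n)} {γ γ' : ℝ → Eucl n} {a b c s t : ℝ}

def IsRectifiablePathOn (D : Set (Eucl n)) (γ : ℝ → Eucl n) (a b : ℝ) : Prop :=
  ContinuousOn γ (Icc a b) ∧ MapsTo γ (Icc a b) D ∧ eVariationOn γ (Icc a b) ≠ ⊤

theorem IsPathIn.isRectifiablePathOn {x y : Eucl n} (hγ : IsPathIn D x y γ)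
    (hrec : Rectifiable γ) : IsRectifiablePathOn D γ 0 1 :=
  ⟨hγ.1, hγ.2.1, hrec⟩

theorem IsRectifiablePathOn.mono (hγ : IsRectifiablePathOn D γ a b) (h : Icc c s ⊆ Icc a b) :
    IsRectifiablePathOn D γ c s :=
  ⟨hγ.1.mono h, hγ.2.1.mono_left h, ne_top_of_le_ne_top hγ.2.2 (eVariationOn.mono γ h)⟩

theorem eVariationOn_Icc_add_Icc {E : Type*} [PseudoEMetricSpace E] (f : ℝ → E) {a b c : ℝ}
    (hab : a ≤ b) (hbc : b ≤ c) :
    eVariationOn f (Icc a b) + eVariationOn f (Icc b c) = eVariationOn f (Icc a c) := by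
  simpa only [univ_inter] using eVariationOn.Icc_add_Icc f hab hbc (mem_univ b)

theorem IsRectifiablePathOn.congr (hγ : IsRectifiablePathOn D γ a b) (h : EqOn γ' γ (Icc a b)) :
    IsRectifiablePathOn D γ' a b :=
  ⟨hγ.1.congr h, hγ.2.1.congr h.symm, eVariationOn.eq_of_eqOn h ▸ hγ.2.2⟩

theorem IsRectifiablePathOn.union (hab : a ≤ b) (hbc : b ≤ c)
    (h₁ : IsRectifiablePathOn D γ a b) (h₂ : IsRectifiablePathOn D γ b c) :
    IsRectifiablePathOn D γ a c := by
  refine ⟨?_, ?_, ?_⟩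
  · rw [← Icc_union_Icc_eq_Icc hab hbc]
    exact h₁.1.union_of_isClosed h₂.1 isClosed_Icc isClosed_Icc
  · rw [← Icc_union_Icc_eq_Icc hab hbc]
    exact h₁.2.1.union h₂.2.1
  · rw [← eVariationOn_Icc_add_Icc γ hab hbc]
    exact ENNReal.add_ne_top.2 ⟨h₁.2.2, h₂.2.2⟩

theorem IsRectifiablePathOn.comp_orderIso (e : ℝ ≃o ℝ)
    (hγ : IsRectifiablePathOn D γ (e a) (e b)) :
    IsRectifiablePathOn D (γ ∘ e) a b := by
  have he : MapsTo e (Icc a b) (Icc (e a) (e b)) := e.image_Icc a b ▸ mapsTo_image e _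
  refine ⟨hγ.1.comp e.continuous.continuousOn he, hγ.2.1.comp he, ?_⟩
  rw [eVariationOn.comp_eq_of_monotoneOn _ _ (e.monotone.monotoneOn _), e.image_Icc]
  exact hγ.2.2

theorem dLength_apol_nonneg (hD : IsDomainIn D) (hγ : MapsTo γ (Icc a b) D) :
    0 ≤ dLength (apol D) γ a b := by
  refine Real.sSup_nonneg ?_
  rintro _ ⟨k, t, ht, ht0, htk, rfl⟩
  refine Finset.sum_nonneg fun i hi => ?_
  have hi := Finset.mem_range.1 hi
  exact apol_nonneg hD (hγ (mem_Icc_of_monotone ht ht0 htk hi.le))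
    (hγ (mem_Icc_of_monotone ht ht0 htk hi))

theorem bddAbove_partitionSums_apol (hD : IsDomainIn D) (hab : a ≤ b)
    (hγ : IsRectifiablePathOn D γ a b) : BddAbove (partitionSums (apol D) γ a b) := by
  obtain ⟨hγc, hγD, hvar⟩ := hγ
  obtain ⟨r₀, hr₀, hmin⟩ := isCompact_Icc.exists_isMinOn (nonempty_Icc.2 hab)
    ((continuous_infDist_pt (frontier D)).comp_continuousOn hγc)
  set δ₀ := bdist D (γ r₀)
  have hδ₀ : 0 < δ₀ := hD.bdist_pos (hγD hr₀)
  refine ⟨2 / δ₀ * (eVariationOn γ (Icc a b)).toReal, ?_⟩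
  rintro _ ⟨k, t, ht, ht0, htk, rfl⟩
  have hmem {j : ℕ} (hj : j ≤ k) : t j ∈ Icc a b := mem_Icc_of_monotone ht ht0 htk hj
  calc ∑ i ∈ Finset.range k, apol D (γ (t i)) (γ (t (i + 1)))
      ≤ ∑ i ∈ Finset.range k, 2 / δ₀ * (edist (γ (t (i + 1))) (γ (t i))).toReal :=
        Finset.sum_le_sum fun i hi => by
          have hi := Finset.mem_range.1 hi
          rw [← dist_edist, dist_comm]
          exact apol_le_two_div_mul_dist hD (hγD (hmem hi.le)) (hγD (hmem hi)) hδ₀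
            (hmin (hmem hi.le)) (hmin (hmem hi))
    _ = 2 / δ₀ * (∑ i ∈ Finset.range k, edist (γ (t (i + 1))) (γ (t i))).toReal := by
        rw [← Finset.mul_sum, ENNReal.toReal_sum fun _ _ => edist_ne_top _ _]
    _ ≤ 2 / δ₀ * (eVariationOn γ (Icc a b)).toReal := by
        gcongr
        rw [Finset.range_eq_Ico]
        exact eVariationOn.sum_le_of_monotoneOn_Icc (ht.monotoneOn _) fun i hi => hmem hi.2

theorem dLength_apol_add (hD : IsDomainIn D) (hab : a ≤ b) (hbc : b ≤ c)
    (hγ : IsRectifiablePathOn D γ a c) :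
    dLength (apol D) γ a c = dLength (apol D) γ a b + dLength (apol D) γ b c := by
  have hbdd {a' b' : ℝ} (h : a' ≤ b') (hsub : Icc a' b' ⊆ Icc a c) :
      BddAbove (partitionSums (apol D) γ a' b') :=
    bddAbove_partitionSums_apol hD h (hγ.mono hsub)
  have h₁ := hbdd hab (Icc_subset_Icc le_rfl hbc)
  have h₂ := hbdd hbc (Icc_subset_Icc hab le_rfl)
  exact le_antisymm
    (dLength_le_add hγ.2.1 (fun _ hp _ hq _ hr => apol_triangle hD hp hq hr) hab hbc h₁ h₂)
    (add_le_dLength hab hbc h₁ h₂ (hbdd (hab.trans hbc) subset_rfl))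

theorem dLength_apol_self (hD : IsDomainIn D) (ha : γ a ∈ D) : dLength (apol D) γ a a = 0 := by
  have hγD : MapsTo γ (Icc a a) D := by simpa using ha
  refine le_antisymm (csSup_le (partitionSums_nonempty le_rfl) ?_) (dLength_apol_nonneg hD hγD)
  rintro _ ⟨k, t, ht, ht0, htk, rfl⟩
  refine Finset.sum_nonpos fun i hi => ?_
  have hi := Finset.mem_range.1 hi
  have hta {j : ℕ} (hj : j ≤ k) : t j = a := by simpa using mem_Icc_of_monotone ht ht0 htk hj
  simpa [hta hi.le, hta hi] using apol_le hD ha ha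

theorem innerApol_nonneg (hD : IsDomainIn D) {x y : Eucl n} : 0 ≤ innerApol D x y :=
  Real.sInf_nonneg <| by rintro _ ⟨σ, hσ, -, rfl⟩; exact dLength_apol_nonneg hD hσ.2.1

theorem innerApol_le_dLength (hD : IsDomainIn D) {x y : Eucl n} (hγ : IsPathIn D x y γ)
    (hrec : Rectifiable γ) : innerApol D x y ≤ dLength (apol D) γ 0 1 :=
  csInf_le ⟨0, by rintro _ ⟨σ, hσ, -, rfl⟩; exact dLength_apol_nonneg hD hσ.2.1⟩
    ⟨γ, hγ, hrec, rfl⟩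

end RectifiablePaths

section Subarcs

variable {n : ℕ} {D : Set (Eucl n)} {γ σ : ℝ → Eucl n} {x y : Eucl n} {s t : ℝ}

theorem image_lineMap_Icc (hst : s ≤ t) :
    (AffineMap.lineMap s t : ℝ → ℝ) '' Icc 0 1 = Icc s t := by
  rw [← segment_eq_image_lineMap, segment_eq_Icc hst]

theorem isPathIn_comp_lineMap (hγc : ContinuousOn γ (Icc 0 1)) (hγD : MapsTo γ (Icc 0 1) D)
    (hs : 0 ≤ s) (hst : s ≤ t) (ht : t ≤ 1) :
    IsPathIn D (γ s) (γ t) (γ ∘ AffineMap.lineMap s t) := by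
  have hmaps : MapsTo (AffineMap.lineMap s t : ℝ → ℝ) (Icc 0 1) (Icc 0 1) := by
    rw [mapsTo_iff_image_subset, image_lineMap_Icc hst]
    exact Icc_subset_Icc hs ht
  exact ⟨hγc.comp AffineMap.lineMap_continuous.continuousOn hmaps, hγD.comp hmaps, by simp,
    by simp⟩

theorem eVariationOn_comp_lineMap (hst : s ≤ t) :
    eVariationOn (γ ∘ AffineMap.lineMap s t) (Icc (0 : ℝ) 1) = eVariationOn γ (Icc s t) := by
  rw [eVariationOn.comp_eq_of_monotoneOn _ _ ((AffineMap.lineMap_mono (k := ℝ) hst).monotoneOn _),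
    image_lineMap_Icc hst]

theorem rhoD_nonneg : 0 ≤ rhoD D x y :=
  Real.sInf_nonneg <| by rintro _ ⟨σ, -, rfl⟩; exact diam_nonneg

theorem rhoD_le_diam_image (hγc : ContinuousOn γ (Icc 0 1)) (hγD : MapsTo γ (Icc 0 1) D)
    (hs : 0 ≤ s) (hst : s ≤ t) (ht : t ≤ 1) : rhoD D (γ s) (γ t) ≤ diam (γ '' Icc s t) :=
  csInf_le ⟨0, by rintro _ ⟨σ, -, rfl⟩; exact diam_nonneg⟩
    ⟨_, isPathIn_comp_lineMap hγc hγD hs hst ht, by rw [image_comp, image_lineMap_Icc hst]⟩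

theorem exists_rhoD_le_two_mul_dist (hγc : ContinuousOn γ (Icc 0 1))
    (hγD : MapsTo γ (Icc 0 1) D) (hs : 0 ≤ s) (hst : s ≤ t) (ht : t ≤ 1) :
    ∃ r ∈ Icc s t, rhoD D (γ s) (γ t) ≤ 2 * dist (γ s) (γ r) := by
  obtain ⟨r, hr, hfar⟩ := isCompact_Icc.exists_isMaxOn (nonempty_Icc.2 hst)
    (f := fun w => dist (γ s) (γ w))
    ((continuous_const.dist continuous_id).comp_continuousOn (hγc.mono (Icc_subset_Icc hs ht)))
  refine ⟨r, hr, (rhoD_le_diam_image hγc hγD hs hst ht).trans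
    (diam_le_of_subset_closedBall (x := γ s) dist_nonneg ?_)⟩
  rintro _ ⟨w, hw, rfl⟩
  exact mem_closedBall'.2 (hfar hw)

theorem exists_replace_subarc (hγ : IsPathIn D x y γ) (hrec : Rectifiable γ) (hs : 0 ≤ s)
    (hst : s < t) (ht : t ≤ 1) (hσ : IsPathIn D (γ s) (γ t) σ) (hσrec : Rectifiable σ) :
    ∃ γ' : ℝ → Eucl n, IsPathIn D x y γ' ∧ Rectifiable γ' ∧ EqOn γ' γ (Icc 0 s) ∧
      EqOn γ' γ (Icc t 1) ∧ dLength (apol D) γ' s t = dLength (apol D) σ 0 1 := by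
  let e : ℝ ≃o ℝ :=
    (OrderIso.addRight (-s)).trans (OrderIso.mulRight₀ (t - s)⁻¹ (by simpa using hst))
  have he (r : ℝ) : e r = (r - s) / (t - s) := by simp [e, div_eq_mul_inv, sub_eq_add_neg]
  have hes : e s = 0 := by rw [he, sub_self, zero_div]
  have het : e t = 1 := by rw [he, div_self (sub_ne_zero.2 hst.ne')]
  let γ' : ℝ → Eucl n := fun r => if r ∈ Icc s t then σ (e r) else γ r
  have hleft : EqOn γ' γ (Icc 0 s) := fun r hr => by
    by_cases h : r ∈ Icc s t
    · obtain rfl : r = s := le_antisymm hr.2 h.1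
      simp [γ', hes, hσ.2.2.1]
    · exact if_neg h
  have hmid : EqOn γ' (σ ∘ e) (Icc s t) := fun r hr => if_pos hr
  have hright : EqOn γ' γ (Icc t 1) := fun r hr => by
    by_cases h : r ∈ Icc s t
    · obtain rfl : r = t := le_antisymm h.2 hr.1
      simp [γ', het, hσ.2.2.2]
    · exact if_neg h
  have hγr := hγ.isRectifiablePathOn hrec
  have hσr : IsRectifiablePathOn D σ (e s) (e t) := by
    rw [hes, het]
    exact hσ.isRectifiablePathOn hσrec
  have hγ'r : IsRectifiablePathOn D γ' 0 1 :=
    ((hγr.mono (Icc_subset_Icc le_rfl (hst.le.trans ht))).congr hleft).union hs hst.le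
      ((hσr.comp_orderIso e).congr hmid) |>.union (hs.trans hst.le) ht
      ((hγr.mono (Icc_subset_Icc (hs.trans hst.le) le_rfl)).congr hright)
  refine ⟨γ', ⟨hγ'r.1, hγ'r.2.1, (hleft ⟨le_rfl, hs⟩).trans hγ.2.2.1,
    (hright ⟨ht, le_rfl⟩).trans hγ.2.2.2⟩, hγ'r.2.2, hleft, hright, ?_⟩
  rw [dLength_congr hmid, dLength_comp_orderIso, hes, het]

end Subarcs

section Minimizing

variable {n : ℕ} {D : Set (Eucl n)} {γ σ : ℝ → Eucl n} {x y : Eucl n} {s t : ℝ}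

theorem dLength_apol_le_of_minimizing (hD : IsDomainIn D) (hγ : IsPathIn D x y γ)
    (hrec : Rectifiable γ) (hopt : dLength (apol D) γ 0 1 = innerApol D x y) (hs : 0 ≤ s)
    (hst : s < t) (ht : t ≤ 1) (hσ : IsPathIn D (γ s) (γ t) σ) (hσrec : Rectifiable σ) :
    dLength (apol D) γ s t ≤ dLength (apol D) σ 0 1 := by
  obtain ⟨γ', hγ', hrec', hleft, hright, hmid⟩ :=
    exists_replace_subarc hγ hrec hs hst ht hσ hσrec
  have hsplit {β : ℝ → Eucl n} (hβ : IsRectifiablePathOn D β 0 1) :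
      dLength (apol D) β 0 1 =
        dLength (apol D) β 0 s + dLength (apol D) β s t + dLength (apol D) β t 1 := by
    rw [dLength_apol_add hD (hs.trans hst.le) ht hβ,
      dLength_apol_add hD hs hst.le (hβ.mono (Icc_subset_Icc le_rfl ht))]
  have hγsplit := hsplit (hγ.isRectifiablePathOn hrec)
  have hγ'split := hsplit (hγ'.isRectifiablePathOn hrec')
  rw [dLength_congr hleft, dLength_congr hright, hmid] at hγ'split
  linarith [innerApol_le_dLength hD hγ' hrec']

theorem dLength_apol_le_innerApol_of_minimizing (hD : IsDomainIn D) (hγ : IsPathIn D x y γ)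
    (hrec : Rectifiable γ) (hopt : dLength (apol D) γ 0 1 = innerApol D x y) (hs : 0 ≤ s)
    (hst : s ≤ t) (ht : t ≤ 1) : dLength (apol D) γ s t ≤ innerApol D (γ s) (γ t) := by
  rcases hst.eq_or_lt with rfl | hst
  · exact (dLength_apol_self hD (hγ.2.1 ⟨hs, ht⟩)).trans_le (innerApol_nonneg hD)
  refine le_csInf ⟨_, _, isPathIn_comp_lineMap hγ.1 hγ.2.1 hs hst.le ht, ?_, rfl⟩ ?_
  · rw [Rectifiable, eVariationOn_comp_lineMap hst.le]
    exact ne_top_of_le_ne_top hrec (eVariationOn.mono γ (Icc_subset_Icc hs ht))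
  · rintro _ ⟨σ, hσ, hσrec, rfl⟩
    exact dLength_apol_le_of_minimizing hD hγ hrec hopt hs hst ht hσ hσrec

end Minimizing

theorem exists_hitting_times {g : ℝ → ℝ} {a b r : ℝ} (hg : ContinuousOn g (Icc a b))
    (hr : r ∈ Icc a b) :
    ∃ τ : ℝ → ℝ, τ (g a) = a ∧ MonotoneOn τ (Icc (g a) (g r)) ∧
      ∀ L ∈ Icc (g a) (g r), τ L ∈ Icc a b ∧ g (τ L) = L := by
  let S : ℝ → Set ℝ := fun L => Icc a b ∩ g ⁻¹' Ici L
  have hbdd (L : ℝ) : BddBelow (S L) := ⟨a, fun _ hx => hx.1.1⟩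
  have hne {L : ℝ} (hL : L ∈ Icc (g a) (g r)) : (S L).Nonempty := ⟨r, hr, hL.2⟩
  have hmem {L : ℝ} (hL : L ∈ Icc (g a) (g r)) : sInf (S L) ∈ S L :=
    (hg.preimage_isClosed_of_isClosed isClosed_Icc isClosed_Ici).csInf_mem (hne hL) (hbdd L)
  refine ⟨fun L => sInf (S L), ?_, ?_,
    fun L hL => ⟨(hmem hL).1, le_antisymm ?_ (hmem hL).2⟩⟩
  · exact IsLeast.csInf_eq
      ⟨⟨left_mem_Icc.2 (hr.1.trans hr.2), le_refl (g a)⟩, fun _ hx => hx.1.1⟩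
  · exact fun L hL L' hL' hLL' => csInf_le_csInf (hbdd L) (hne hL')
      fun x hx => ⟨hx.1, hLL'.trans hx.2⟩
  · -- the level `L` is already reached on `[a, τ L]`, hence exactly at `τ L`
    obtain ⟨c, hc, hcL⟩ := intermediate_value_Icc (hmem hL).1.1 (hg.mono (Icc_subset_Icc le_rfl
      (hmem hL).1.2)) ⟨hL.1, (hmem hL).2⟩
    have hcS : c ∈ S L := ⟨⟨hc.1, hc.2.trans (hmem hL).1.2⟩, hcL.ge⟩
    show g (sInf (S L)) ≤ L
    rw [← le_antisymm hc.2 (csInf_le (hbdd L) hcS), hcL]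

theorem exists_monotone_dist_ge {E : Type*} [PseudoMetricSpace E] {f : ℝ → E} {a b r ε : ℝ}
    (hf : ContinuousOn f (Icc a b)) (hr : r ∈ Icc a b) (hε : 0 ≤ ε) {k : ℕ}
    (hk : k * ε ≤ dist (f a) (f r)) :
    ∃ T : ℕ → ℝ, Monotone T ∧ T 0 = a ∧ T (k + 1) = b ∧ (∀ j, T j ∈ Icc a b) ∧
      ∀ j < k, ε ≤ dist (f (T j)) (f (T (j + 1))) := by
  obtain ⟨τ, hτa, hτ, hτL⟩ := exists_hitting_times
    (g := fun x => dist (f a) (f x)) ((continuous_const.dist continuous_id).comp_continuousOn hf) hr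
  simp only [dist_self] at hτa hτ hτL
  have hlevel {j : ℕ} (hj : j ≤ k) : (j * ε : ℝ) ∈ Icc 0 (dist (f a) (f r)) :=
    ⟨by positivity, (mul_le_mul_of_nonneg_right (Nat.cast_le.2 hj) hε).trans hk⟩
  refine ⟨fun j => if j ≤ k then τ (j * ε) else (fun _ => b) (j - k), ?_, ?_, ?_, ?_, ?_⟩
  · refine monotone_ite_le_sub (fun i hi j hj hij => hτ (hlevel hi) (hlevel hj) ?_) monotone_const
      (hτL _ (hlevel le_rfl)).1.2
    gcongr
  · simp [hτa]
  · simp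
  · intro j
    dsimp only
    split_ifs with hj
    exacts [(hτL _ (hlevel hj)).1, right_mem_Icc.2 (hr.1.trans hr.2)]
  · intro j hj
    simp only [if_pos hj.le, if_pos (Nat.succ_le_of_lt hj)]
    have h₁ := (hτL _ (hlevel hj.le)).2
    have h₂ := (hτL _ (hlevel (Nat.succ_le_of_lt hj))).2
    push_cast at h₂ ⊢
    linarith [dist_triangle (f a) (f (τ (j * ε))) (f (τ ((j + 1) * ε)))]

theorem floor_mul_log_four_le_dLength_apol {n : ℕ} {D : Set (Eucl n)} {γ : ℝ → Eucl n}
    {s t r m : ℝ} (hD : IsDomainIn D) (hγ : IsRectifiablePathOn D γ s t)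
    (hm : ∀ w ∈ Icc s t, bdist D (γ w) ≤ m) (hr : r ∈ Icc s t) :
    ⌊dist (γ s) (γ r) / (3 * m)⌋₊ * log 4 ≤ dLength (apol D) γ s t := by
  have hγD := hγ.2.1
  have hst : s ≤ t := hr.1.trans hr.2
  have hm₀ : 0 < m :=
    (hD.bdist_pos (hγD (left_mem_Icc.2 hst))).trans_le (hm s (left_mem_Icc.2 hst))
  set k := ⌊dist (γ s) (γ r) / (3 * m)⌋₊
  have hk : k * (3 * m) ≤ dist (γ s) (γ r) :=
    (le_div_iff₀ (by positivity)).1 (Nat.floor_le (by positivity))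
  obtain ⟨T, hT, hT0, hTk, hTmem, hTdist⟩ := exists_monotone_dist_ge hγ.1 hr (by positivity) hk
  have hpart : (∑ i ∈ Finset.range (k + 1), apol D (γ (T i)) (γ (T (i + 1)))) ∈
      partitionSums (apol D) γ s t := ⟨k + 1, T, hT, hT0, hTk, rfl⟩
  calc (k : ℝ) * log 4 = ∑ _i ∈ Finset.range k, log 4 := by simp
    _ ≤ ∑ i ∈ Finset.range k, apol D (γ (T i)) (γ (T (i + 1))) :=
        Finset.sum_le_sum fun i hi => log_four_le_apol hD (hγD (hTmem i)) (hγD (hTmem (i + 1)))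
          (hm _ (hTmem i)) (hm _ (hTmem (i + 1))) (hTdist i (Finset.mem_range.1 hi))
    _ ≤ ∑ i ∈ Finset.range (k + 1), apol D (γ (T i)) (γ (T (i + 1))) := by
        rw [Finset.sum_range_succ]
        exact le_add_of_nonneg_right (apol_nonneg hD (hγD (hTmem k)) (hγD (hTmem (k + 1))))
    _ ≤ dLength (apol D) γ s t := le_csSup (bddAbove_partitionSums_apol hD hst hγ) hpart

theorem one_le_log_four : 1 ≤ log 4 := by
  rw [show (4 : ℝ) = 2 ^ 2 by norm_num, log_pow]
  push_cast
  linarith [log_two_gt_d9]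

/-- `⌊Y/12⌋ log 4` grows linearly and `log (1 + Y) ≤ 2 (√(1 + Y) - 1)` only like `√Y`. -/
theorem le_sq_of_floor_mul_log_four_le {c Y : ℝ} (hc : 1 / 4 ≤ c) (hY : 0 ≤ Y)
    (h : ⌊Y / 12⌋₊ * log 4 ≤ c * log (1 + Y)) : Y ≤ (1 + 24 * c) ^ 2 := by
  set S := √(1 + Y)
  have hS : S ^ 2 = 1 + Y := sq_sqrt (by linarith)
  have hS1 : 1 ≤ S := one_le_sqrt.2 (by linarith)
  have hlog : log (1 + Y) ≤ 2 * (S - 1) := by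
    rw [← hS, log_pow]
    push_cast
    linarith [log_le_sub_one_of_pos (by positivity : 0 < S)]
  have hfloor : Y / 12 - 1 ≤ ⌊Y / 12⌋₊ * log 4 := by
    nlinarith [Nat.lt_floor_add_one (Y / 12), one_le_log_four,
      (Nat.cast_nonneg _ : (0 : ℝ) ≤ ⌊Y / 12⌋₊)]
  have hSc : S ≤ 1 + 24 * c := by nlinarith
  nlinarith

theorem rho_subarc_le_general {n : ℕ} (D : Set (Eucl n)) (hD : IsDomainIn D)
    (c₂ : ℝ) (hc₂ : 1 < c₂)
    (h : ∀ x ∈ D, ∀ y ∈ D, innerApol D x y ≤ c₂ * jP D x y)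
    (x y : Eucl n) (γ : ℝ → Eucl n)
    (hγ : IsPathIn D x y γ) (hrec : Rectifiable γ)
    (hopt : dLength (apol D) γ 0 1 = innerApol D x y)
    (s t : ℝ) (hs : s ∈ Set.Icc (0:ℝ) 1) (ht : t ∈ Set.Icc (0:ℝ) 1) (hst : s ≤ t)
    (huv : bdist D (γ s) ≤ bdist D (γ t))
    (hw : ∀ r ∈ Set.Icc s t, bdist D (γ r) ≤ 2 * bdist D (γ s)) :
    rhoD D (γ s) (γ t) ≤ (1 + 24 * ((⌊c₂⌋ : ℝ) + 1)) ^ 2 * bdist D (γ s) := by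
  set δ := bdist D (γ s)
  have hδ : 0 < δ := hD.bdist_pos (hγ.2.1 hs)
  obtain ⟨r, hr, hρ⟩ := exists_rhoD_le_two_mul_dist hγ.1 hγ.2.1 hs.1 hst ht.2
  set Y := 2 * dist (γ s) (γ r) / δ
  have hρY : rhoD D (γ s) (γ t) ≤ Y * δ := by rwa [div_mul_cancel₀ _ hδ.ne']
  have hlen : ⌊Y / 12⌋₊ * log 4 ≤ dLength (apol D) γ s t := by
    rw [show Y / 12 = dist (γ s) (γ r) / (3 * (2 * δ)) by simp only [Y]; field_simp; ring]
    exact floor_mul_log_four_le_dLength_apol hD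
      ((hγ.isRectifiablePathOn hrec).mono (Icc_subset_Icc hs.1 ht.2)) hw hr
  have hj : jP D (γ s) (γ t) ≤ log (1 + Y) := by
    rw [jP, min_eq_left huv]
    have := rhoD_nonneg (D := D) (x := γ s) (y := γ t)
    exact log_le_log (by positivity) (by gcongr; rwa [div_le_iff₀ hδ])
  have hY : Y ≤ (1 + 24 * c₂) ^ 2 :=
    le_sq_of_floor_mul_log_four_le (by linarith) (by positivity) <|
    calc (⌊Y / 12⌋₊ : ℝ) * log 4 ≤ innerApol D (γ s) (γ t) :=
          hlen.trans (dLength_apol_le_innerApol_of_minimizing hD hγ hrec hopt hs.1 hst ht.2)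
      _ ≤ c₂ * jP D (γ s) (γ t) := h _ (hγ.2.1 hs) _ (hγ.2.1 ht)
      _ ≤ c₂ * log (1 + Y) := by gcongr
  calc rhoD D (γ s) (γ t) ≤ Y * δ := hρY
    _ ≤ (1 + 24 * ((⌊c₂⌋ : ℝ) + 1)) ^ 2 * δ := by
        gcongr
        exact hY.trans (by gcongr; exact (Int.lt_floor_add_one c₂).le)

/-- Lemma 2.1(2): Under the hypotheses of Lemma 2.1,
`ρ_D(u,v) ≤ (1+b₁)² d_D(u)` where `b₁ = 24([c₂]+1)`. -/
theorem rho_subarc_le {n : ℕ} (hn : 2 ≤ n) (D : Set (Eucl n)) (hD : IsDomainIn D)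
    (hA : IsApollonian D) (c₂ : ℝ) (hc₂ : 1 < c₂)
    (h : ∀ x ∈ D, ∀ y ∈ D, innerApol D x y ≤ c₂ * jP D x y)
    (x y : Eucl n) (hx : x ∈ D) (hy : y ∈ D) (γ : ℝ → Eucl n)
    (hγ : IsPathIn D x y γ) (hrec : Rectifiable γ)
    (hopt : dLength (apol D) γ 0 1 = innerApol D x y)
    (s t : ℝ) (hs : s ∈ Set.Icc (0:ℝ) 1) (ht : t ∈ Set.Icc (0:ℝ) 1) (hst : s ≤ t)
    (huv : bdist D (γ s) ≤ bdist D (γ t))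
    (hdv : bdist D (γ t) = 2 * bdist D (γ s))
    (hw : ∀ r ∈ Set.Icc s t, bdist D (γ r) ≤ 2 * bdist D (γ s)) :
    rhoD D (γ s) (γ t) ≤ (1 + 24 * ((⌊c₂⌋ : ℝ) + 1)) ^ 2 * bdist D (γ s) :=
  rho_subarc_le_general D hD c₂ hc₂ h x y γ hγ hrec hopt s t hs ht hst huv hw
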